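/- arXiv:0808.2731 — 2 statements merged into one kernel-verified Lean document; each statement's English description precedes it below -/
import Mathlib

section
/- Suppose u*(y) > 0 for every y ∈ Bᶜ, and define the transition kernel P*(y, dz) = P(y, dz) u*(z)/u*(y) for y ∈ Bᶜ (so P*(y, ·) is a probability measure by harmonicity of u*; on B let P* be absorbing). Then for every y ∈ Bᶜ and every nonnegative random variable Λ on path space that is ℱ_T-measurable (i.e., Λ·1{T = n} is a measurable function of (Y₀, …, Y_n) for each n ≥ 0), one has E_y[Λ | T < ∞, Y_T ∈ A] = E*_y[Λ], where E*_y denotes expectation for the chain with kernel P* started at y. -/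
open MeasureTheory ProbabilityTheory Filter Set
open scoped ENNReal NNReal

noncomputable section

/-- Prepend a point to a path. -/
def prepend {𝒳 : Type*} (y : 𝒳) (ω : ℕ → 𝒳) : ℕ → 𝒳 := fun n =>
  match n with
  | 0 => y
  | k + 1 => ω k

/-- First hitting time of `B` (with value `⊤` if `B` is never hit). -/
def hitTime {𝒳 : Type*} (B : Set 𝒳) (ω : ℕ → 𝒳) : ℕ∞ :=
  sInf ((fun n : ℕ => (n : ℕ∞)) '' {n : ℕ | ω n ∈ B})

/-- `u*(y) = P_y(T < ∞, Y_T ∈ A)`, where `μ y` is the law of the chain started at `y`. -/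
def uStar {𝒳 : Type*} [MeasurableSpace 𝒳] (B A : Set 𝒳)
    (μ : 𝒳 → Measure (ℕ → 𝒳)) (y : 𝒳) : ℝ≥0∞ :=
  μ y {ω | ∃ n : ℕ, hitTime B ω = (n : ℕ∞) ∧ ω n ∈ A}

section Aux

variable {𝒳 : Type*}

lemma measurable_prepend [MeasurableSpace 𝒳] (y : 𝒳) : Measurable (prepend y) := by
  apply measurable_pi_lambda
  intro n
  match n with
  | 0 => exact measurable_const
  | (k + 1) => exact measurable_pi_apply k

lemma hitTime_eq_iff {B : Set 𝒳} {ω : ℕ → 𝒳} {n : ℕ} :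
    hitTime B ω = (n : ℕ∞) ↔ ω n ∈ B ∧ ∀ k < n, ω k ∉ B := by
  constructor
  · intro h
    have hlow : ∀ k < n, ω k ∉ B := by
      intro k hk hmem
      have h1 : hitTime B ω ≤ (k : ℕ∞) := sInf_le ⟨k, hmem, rfl⟩
      rw [h] at h1
      exact absurd (Nat.cast_le.mp h1) (not_le.mpr hk)
    refine ⟨?_, hlow⟩
    by_contra hmem
    have h2 : ((n + 1 : ℕ) : ℕ∞) ≤ hitTime B ω := by
      apply le_sInf
      rintro a ⟨k, hk, rfl⟩
      have hkn : n + 1 ≤ k := by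
        rcases lt_trichotomy k n with h' | h' | h'
        · exact absurd hk (hlow k h')
        · exact absurd hk (h' ▸ hmem)
        · omega
      exact Nat.cast_le.mpr hkn
    rw [h] at h2
    have h3 : n + 1 ≤ n := Nat.cast_le.mp h2
    omega
  · rintro ⟨h1, h2⟩
    refine le_antisymm (sInf_le ⟨n, h1, rfl⟩) ?_
    apply le_sInf
    rintro a ⟨k, hk, rfl⟩
    exact Nat.cast_le.mpr (not_lt.mp fun hc => h2 k hc hk)

lemma hitTime_prepend_mem {B : Set 𝒳} {y : 𝒳} (hy : y ∈ B) (ω : ℕ → 𝒳) :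
    hitTime B (prepend y ω) = ((0 : ℕ) : ℕ∞) :=
  hitTime_eq_iff.mpr ⟨hy, fun k hk => absurd hk (Nat.not_lt_zero k)⟩

lemma hitTime_prepend_succ {B : Set 𝒳} {y : 𝒳} (hy : y ∉ B) (ω : ℕ → 𝒳) (n : ℕ) :
    hitTime B (prepend y ω) = ((n + 1 : ℕ) : ℕ∞) ↔ hitTime B ω = (n : ℕ∞) := by
  rw [hitTime_eq_iff, hitTime_eq_iff]
  constructor
  · rintro ⟨h1, h2⟩
    exact ⟨h1, fun k hk => h2 (k + 1) (by omega)⟩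
  · rintro ⟨h1, h2⟩
    refine ⟨h1, fun k hk => ?_⟩
    match k with
    | 0 => exact hy
    | (j + 1) => exact h2 j (by omega)

lemma measurableSet_hitTime_eq [MeasurableSpace 𝒳] {B : Set 𝒳} (hB : MeasurableSet B) (n : ℕ) :
    MeasurableSet {ω : ℕ → 𝒳 | hitTime B ω = (n : ℕ∞)} := by
  have h : {ω : ℕ → 𝒳 | hitTime B ω = (n : ℕ∞)}
      = (fun ω : ℕ → 𝒳 => ω n) ⁻¹' B ∩ ⋂ k ∈ Finset.range n, (fun ω : ℕ → 𝒳 => ω k) ⁻¹' Bᶜ := by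
    ext ω
    simp only [Set.mem_setOf_eq, hitTime_eq_iff, Set.mem_inter_iff, Set.mem_preimage,
      Set.mem_iInter, Finset.mem_range, Set.mem_compl_iff]
  rw [h]
  exact (measurable_pi_apply n hB).inter
    (MeasurableSet.biInter (Finset.range n).countable_toSet
      fun k _ => measurable_pi_apply k hB.compl)

end Aux

/-- the zero-variance change of measure: for `ℱ_T`-measurable nonnegative `Λ`,
`E_y[Λ | T < ∞, Y_T ∈ A] = E*_y[Λ]`, where the `*`-chain has transition kernel
`P*(y, dz) = P(y, dz) u*(z) / u*(y)` on `Bᶜ` (and is absorbing on `B`). -/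
theorem statement1 {𝒳 : Type*} [MeasurableSpace 𝒳] [StandardBorelSpace 𝒳]
    (P : Kernel 𝒳 𝒳) [IsMarkovKernel P]
    (B A : Set 𝒳) (hB : MeasurableSet B) (hA : MeasurableSet A) (hAB : A ⊆ B)
    -- `μ y` is the law of the Markov chain with kernel `P` started at `y`
    (μ : 𝒳 → Measure (ℕ → 𝒳)) (hμmeas : Measurable μ)
    (hμprob : ∀ y, IsProbabilityMeasure (μ y))
    (hμchain : ∀ y, μ y = (P y).bind fun z => (μ z).map (prepend y))
    -- positivity of `u*` off `B`
    (hupos : ∀ y ∉ B, 0 < uStar B A μ y)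
    -- the kernel `P*`
    (Pstar : Kernel 𝒳 𝒳)
    (hPstar : ∀ y ∉ B,
      Pstar y = (P y).withDensity fun z => uStar B A μ z / uStar B A μ y)
    (hPstarAbs : ∀ y ∈ B, Pstar y = Measure.dirac y)
    -- `ν y` is the law of the Markov chain with kernel `P*` started at `y`
    (ν : 𝒳 → Measure (ℕ → 𝒳)) (hνmeas : Measurable ν)
    (hνprob : ∀ y, IsProbabilityMeasure (ν y))
    (hνchain : ∀ y, ν y = (Pstar y).bind fun z => (ν z).map (prepend y))
    -- `Λ` is nonnegative and `ℱ_T`-measurable: `Λ·1{T = n}` is a measurable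
    -- function of `(Y₀, …, Y_n)` for each `n`
    (Λ : (ℕ → 𝒳) → ℝ≥0∞)
    (hΛ : ∀ n : ℕ, ∃ g : (Fin (n + 1) → 𝒳) → ℝ≥0∞, Measurable g ∧
      ∀ ω, (if hitTime B ω = (n : ℕ∞) then Λ ω else 0) = g fun i => ω i.val) :
    ∀ y ∉ B,
      (∫⁻ ω in {ω | ∃ n : ℕ, hitTime B ω = (n : ℕ∞) ∧ ω n ∈ A}, Λ ω ∂(μ y)) /
          μ y {ω | ∃ n : ℕ, hitTime B ω = (n : ℕ∞) ∧ ω n ∈ A} =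
        ∫⁻ ω, Λ ω ∂(ν y) := by
  classical
  intro y hy
  -- basic measurability facts
  have hresm : ∀ n : ℕ, Measurable (fun ω : ℕ → 𝒳 => fun i : Fin (n + 1) => ω i.val) :=
    fun n => measurable_pi_lambda _ fun i => measurable_pi_apply _
  have hSn : ∀ n : ℕ, MeasurableSet {ω : ℕ → 𝒳 | hitTime B ω = (n : ℕ∞) ∧ ω n ∈ A} :=
    fun n => (measurableSet_hitTime_eq hB n).inter (measurable_pi_apply n hA)
  have hS : MeasurableSet {ω : ℕ → 𝒳 | ∃ n : ℕ, hitTime B ω = (n : ℕ∞) ∧ ω n ∈ A} := by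
    have h : {ω : ℕ → 𝒳 | ∃ n : ℕ, hitTime B ω = (n : ℕ∞) ∧ ω n ∈ A}
        = ⋃ n : ℕ, {ω : ℕ → 𝒳 | hitTime B ω = (n : ℕ∞) ∧ ω n ∈ A} := by
      ext ω; simp
    rw [h]; exact MeasurableSet.iUnion hSn
  have humeas : Measurable (uStar B A μ) := (Measure.measurable_coe hS).comp hμmeas
  have hule : ∀ z, uStar B A μ z ≤ 1 := fun z => by
    have := hμprob z; exact prob_le_one
  have hune : ∀ z, uStar B A μ z ≠ ∞ :=
    fun z => ((hule z).trans_lt ENNReal.one_lt_top).ne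
  -- measurability of the integrands
  have hintL : ∀ (n : ℕ) (g : (Fin (n + 1) → 𝒳) → ℝ≥0∞), Measurable g →
      Measurable fun ω : ℕ → 𝒳 =>
        (if hitTime B ω = (n : ℕ∞) ∧ ω n ∈ A then g (fun i => ω i.val) else 0) :=
    fun n g hg => Measurable.ite (hSn n) (hg.comp (hresm n)) measurable_const
  have hintR : ∀ (n : ℕ) (g : (Fin (n + 1) → 𝒳) → ℝ≥0∞), Measurable g →
      Measurable fun ω : ℕ → 𝒳 =>
        (if hitTime B ω = (n : ℕ∞) then g (fun i => ω i.val) else 0) :=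
    fun n g hg => Measurable.ite (measurableSet_hitTime_eq hB n) (hg.comp (hresm n))
      measurable_const
  -- one-step expansion of the chains
  have lintμ : ∀ (x : 𝒳) (f : (ℕ → 𝒳) → ℝ≥0∞), Measurable f →
      ∫⁻ ω, f ω ∂μ x = ∫⁻ z, ∫⁻ ω, f (prepend x ω) ∂μ z ∂P x := by
    intro x f hf
    conv_lhs => rw [hμchain x]
    have hm : Measurable fun z => (μ z).map (prepend x) :=
      (Measure.measurable_map _ (measurable_prepend x)).comp hμmeas
    rw [Measure.lintegral_bind hm.aemeasurable hf.aemeasurable]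
    exact lintegral_congr fun z => lintegral_map hf (measurable_prepend x)
  have lintν : ∀ (x : 𝒳) (f : (ℕ → 𝒳) → ℝ≥0∞), Measurable f →
      ∫⁻ ω, f ω ∂ν x = ∫⁻ z, ∫⁻ ω, f (prepend x ω) ∂ν z ∂Pstar x := by
    intro x f hf
    conv_lhs => rw [hνchain x]
    have hm : Measurable fun z => (ν z).map (prepend x) :=
      (Measure.measurable_map _ (measurable_prepend x)).comp hνmeas
    rw [Measure.lintegral_bind hm.aemeasurable hf.aemeasurable]
    exact lintegral_congr fun z => lintegral_map hf (measurable_prepend x)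
  -- value of `uStar` on `B`
  have huB : ∀ z ∈ B, uStar B A μ z = if z ∈ A then 1 else 0 := by
    intro z hz
    have hval : ∀ ω : ℕ → 𝒳, Set.indicator
        {ω : ℕ → 𝒳 | ∃ n : ℕ, hitTime B ω = (n : ℕ∞) ∧ ω n ∈ A}
        (1 : (ℕ → 𝒳) → ℝ≥0∞) (prepend z ω) = (if z ∈ A then 1 else 0) := by
      intro ω
      rw [Set.indicator_apply]
      simp only [Set.mem_setOf_eq, Pi.one_apply]
      by_cases hzA : z ∈ A
      · rw [if_pos hzA, if_pos ⟨0, hitTime_prepend_mem hz ω, hzA⟩]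
      · rw [if_neg hzA, if_neg]
        rintro ⟨n, hn, hnA⟩
        have hn0 : (0 : ℕ) = n := Nat.cast_inj.mp ((hitTime_prepend_mem hz ω).symm.trans hn)
        rw [← hn0] at hnA
        exact hzA hnA
    have h0 : uStar B A μ z = ∫⁻ ω, Set.indicator
        {ω : ℕ → 𝒳 | ∃ n : ℕ, hitTime B ω = (n : ℕ∞) ∧ ω n ∈ A}
        (1 : (ℕ → 𝒳) → ℝ≥0∞) ω ∂μ z :=
      (lintegral_indicator_one hS).symm
    rw [h0, lintμ z _ (measurable_one.indicator hS)]
    have e1 : ∀ w, ∫⁻ ω, Set.indicator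
        {ω : ℕ → 𝒳 | ∃ n : ℕ, hitTime B ω = (n : ℕ∞) ∧ ω n ∈ A}
        (1 : (ℕ → 𝒳) → ℝ≥0∞) (prepend z ω) ∂μ w
        = (if z ∈ A then 1 else 0) := by
      intro w
      have := hμprob w
      rw [lintegral_congr hval, lintegral_const, measure_univ, mul_one]
    rw [lintegral_congr e1, lintegral_const, measure_univ, mul_one]
  -- the key identity, by induction on the hitting time
  have key : ∀ (n : ℕ) (g : (Fin (n + 1) → 𝒳) → ℝ≥0∞), Measurable g → ∀ z : 𝒳,
      ∫⁻ ω, (if hitTime B ω = (n : ℕ∞) ∧ ω n ∈ A then g (fun i => ω i.val) else 0) ∂μ z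
        = uStar B A μ z *
          ∫⁻ ω, (if hitTime B ω = (n : ℕ∞) then g (fun i => ω i.val) else 0) ∂ν z := by
    intro n
    induction n with
    | zero =>
      intro g hg z
      rw [lintμ z _ (hintL 0 g hg), lintν z _ (hintR 0 g hg)]
      have hL : ∀ ω : ℕ → 𝒳,
          (if hitTime B (prepend z ω) = ((0 : ℕ) : ℕ∞) ∧ prepend z ω 0 ∈ A
            then g (fun i => prepend z ω i.val) else 0)
          = (if z ∈ B ∧ z ∈ A then g (fun _ => z) else 0) := by
        intro ω
        have hiff : (hitTime B (prepend z ω) = ((0 : ℕ) : ℕ∞) ∧ prepend z ω 0 ∈ A)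
            ↔ (z ∈ B ∧ z ∈ A) := by
          rw [hitTime_eq_iff]
          exact ⟨fun ⟨⟨h1, _⟩, h2⟩ => ⟨h1, h2⟩,
            fun ⟨h1, h2⟩ => ⟨⟨h1, fun k hk => absurd hk (Nat.not_lt_zero k)⟩, h2⟩⟩
        have harg : (fun i : Fin 1 => prepend z ω i.val) = fun _ => z := by
          funext i
          have h' : i = 0 := Fin.eq_zero i
          subst h'
          rfl
        rw [harg]
        by_cases h : z ∈ B ∧ z ∈ A
        · rw [if_pos (hiff.mpr h), if_pos h]
        · rw [if_neg (fun hc => h (hiff.mp hc)), if_neg h]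
      have hR : ∀ ω : ℕ → 𝒳,
          (if hitTime B (prepend z ω) = ((0 : ℕ) : ℕ∞)
            then g (fun i => prepend z ω i.val) else 0)
          = (if z ∈ B then g (fun _ => z) else 0) := by
        intro ω
        have hiff : hitTime B (prepend z ω) = ((0 : ℕ) : ℕ∞) ↔ z ∈ B := by
          rw [hitTime_eq_iff]
          exact ⟨fun ⟨h1, _⟩ => h1, fun h1 => ⟨h1, fun k hk => absurd hk (Nat.not_lt_zero k)⟩⟩
        have harg : (fun i : Fin 1 => prepend z ω i.val) = fun _ => z := by
          funext i
          have h' : i = 0 := Fin.eq_zero i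
          subst h'
          rfl
        rw [harg]
        by_cases h : z ∈ B
        · rw [if_pos (hiff.mpr h), if_pos h]
        · rw [if_neg (fun hc => h (hiff.mp hc)), if_neg h]
      have eL : ∀ w, ∫⁻ ω, (if hitTime B (prepend z ω) = ((0 : ℕ) : ℕ∞) ∧ prepend z ω 0 ∈ A
            then g (fun i => prepend z ω i.val) else 0) ∂μ w
          = (if z ∈ B ∧ z ∈ A then g (fun _ => z) else 0) := by
        intro w
        have := hμprob w
        rw [lintegral_congr hL, lintegral_const, measure_univ, mul_one]
      have eR : ∀ w, ∫⁻ ω, (if hitTime B (prepend z ω) = ((0 : ℕ) : ℕ∞)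
            then g (fun i => prepend z ω i.val) else 0) ∂ν w
          = (if z ∈ B then g (fun _ => z) else 0) := by
        intro w
        have := hνprob w
        rw [lintegral_congr hR, lintegral_const, measure_univ, mul_one]
      rw [lintegral_congr eL, lintegral_congr eR]
      by_cases hzB : z ∈ B
      · rw [hPstarAbs z hzB]
        rw [lintegral_const, lintegral_const, measure_univ, measure_univ, mul_one, mul_one,
          huB z hzB]
        by_cases hzA : z ∈ A
        · rw [if_pos ⟨hzB, hzA⟩, if_pos hzA, if_pos hzB, one_mul]
        · rw [if_neg (fun hc => hzA hc.2), if_neg hzA, zero_mul]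
      · rw [if_neg (fun hc => hzB hc.1), if_neg hzB]
        simp
    | succ n ih =>
      intro g hg z
      rw [lintμ z _ (hintL (n + 1) g hg), lintν z _ (hintR (n + 1) g hg)]
      by_cases hzB : z ∈ B
      · -- both sides vanish
        have hL0 : ∀ ω : ℕ → 𝒳,
            (if hitTime B (prepend z ω) = ((n + 1 : ℕ) : ℕ∞) ∧ prepend z ω (n + 1) ∈ A
              then g (fun i => prepend z ω i.val) else 0) = 0 := by
          intro ω
          rw [if_neg]
          rintro ⟨h1, -⟩
          have : (0 : ℕ) = n + 1 := Nat.cast_inj.mp ((hitTime_prepend_mem hzB ω).symm.trans h1)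
          omega
        have hR0 : ∀ ω : ℕ → 𝒳,
            (if hitTime B (prepend z ω) = ((n + 1 : ℕ) : ℕ∞)
              then g (fun i => prepend z ω i.val) else 0) = 0 := by
          intro ω
          rw [if_neg]
          intro h1
          have : (0 : ℕ) = n + 1 := Nat.cast_inj.mp ((hitTime_prepend_mem hzB ω).symm.trans h1)
          omega
        have eL : ∀ w, ∫⁻ ω, (if hitTime B (prepend z ω) = ((n + 1 : ℕ) : ℕ∞) ∧
              prepend z ω (n + 1) ∈ A then g (fun i => prepend z ω i.val) else 0) ∂μ w
            = 0 := fun w => by rw [lintegral_congr hL0, lintegral_zero]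
        have eR : ∀ w, ∫⁻ ω, (if hitTime B (prepend z ω) = ((n + 1 : ℕ) : ℕ∞)
              then g (fun i => prepend z ω i.val) else 0) ∂ν w
            = 0 := fun w => by rw [lintegral_congr hR0, lintegral_zero]
        rw [lintegral_congr eL, lintegral_congr eR, lintegral_zero, lintegral_zero, mul_zero]
      · -- the inductive step proper
        set g' : (Fin (n + 1) → 𝒳) → ℝ≥0∞ := fun v => g (Fin.cons z v) with hg'def
        have hconsm : Measurable (fun v : Fin (n + 1) → 𝒳 => (Fin.cons z v : Fin (n + 2) → 𝒳)) := by
          apply measurable_pi_lambda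
          intro i
          refine Fin.cases ?_ ?_ i
          · simpa using measurable_const
          · intro j
            simpa using measurable_pi_apply j
        have hg' : Measurable g' := hg.comp hconsm
        have hargs : ∀ ω : ℕ → 𝒳, (fun i : Fin (n + 2) => prepend z ω i.val)
            = Fin.cons z (fun j : Fin (n + 1) => ω j.val) := by
          intro ω
          funext i
          refine Fin.cases ?_ ?_ i
          · simp [prepend]
          · intro j
            simp [prepend, Fin.cons_succ]
        have hLcond : ∀ ω : ℕ → 𝒳,
            (if hitTime B (prepend z ω) = ((n + 1 : ℕ) : ℕ∞) ∧ prepend z ω (n + 1) ∈ A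
              then g (fun i => prepend z ω i.val) else 0)
            = (if hitTime B ω = (n : ℕ∞) ∧ ω n ∈ A then g' (fun j => ω j.val) else 0) := by
          intro ω
          rw [hargs ω]
          by_cases h : hitTime B ω = (n : ℕ∞) ∧ ω n ∈ A
          · rw [if_pos ⟨(hitTime_prepend_succ hzB ω n).mpr h.1, h.2⟩, if_pos h]
          · rw [if_neg (fun hc => h ⟨(hitTime_prepend_succ hzB ω n).mp hc.1, hc.2⟩), if_neg h]
        have hRcond : ∀ ω : ℕ → 𝒳,
            (if hitTime B (prepend z ω) = ((n + 1 : ℕ) : ℕ∞)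
              then g (fun i => prepend z ω i.val) else 0)
            = (if hitTime B ω = (n : ℕ∞) then g' (fun j => ω j.val) else 0) := by
          intro ω
          rw [hargs ω]
          by_cases h : hitTime B ω = (n : ℕ∞)
          · rw [if_pos ((hitTime_prepend_succ hzB ω n).mpr h), if_pos h]
          · rw [if_neg (fun hc => h ((hitTime_prepend_succ hzB ω n).mp hc)), if_neg h]
        have eL : ∀ w, ∫⁻ ω, (if hitTime B (prepend z ω) = ((n + 1 : ℕ) : ℕ∞) ∧
              prepend z ω (n + 1) ∈ A then g (fun i => prepend z ω i.val) else 0) ∂μ w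
            = ∫⁻ ω, (if hitTime B ω = (n : ℕ∞) ∧ ω n ∈ A
              then g' (fun j => ω j.val) else 0) ∂μ w :=
          fun w => lintegral_congr hLcond
        have eR : ∀ w, ∫⁻ ω, (if hitTime B (prepend z ω) = ((n + 1 : ℕ) : ℕ∞)
              then g (fun i => prepend z ω i.val) else 0) ∂ν w
            = ∫⁻ ω, (if hitTime B ω = (n : ℕ∞) then g' (fun j => ω j.val) else 0) ∂ν w :=
          fun w => lintegral_congr hRcond
        rw [lintegral_congr eL, lintegral_congr eR]
        have hRw : Measurable fun w =>
            ∫⁻ ω, (if hitTime B ω = (n : ℕ∞) then g' (fun j => ω j.val) else 0) ∂ν w :=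
          (Measure.measurable_lintegral (hintR n g' hg')).comp hνmeas
        have step1 : ∫⁻ w, ∫⁻ ω, (if hitTime B ω = (n : ℕ∞) ∧ ω n ∈ A
              then g' (fun j => ω j.val) else 0) ∂μ w ∂P z
            = ∫⁻ w, uStar B A μ w *
              ∫⁻ ω, (if hitTime B ω = (n : ℕ∞) then g' (fun j => ω j.val) else 0) ∂ν w ∂P z :=
          lintegral_congr fun w => ih g' hg' w
        rw [step1]
        rw [hPstar z hzB]
        have hwd : ∫⁻ w, (∫⁻ ω, (if hitTime B ω = (n : ℕ∞) then g' (fun j => ω j.val) else 0) ∂ν w)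
            ∂((P z).withDensity fun w => uStar B A μ w / uStar B A μ z)
            = ∫⁻ w, uStar B A μ w / uStar B A μ z *
              ∫⁻ ω, (if hitTime B ω = (n : ℕ∞) then g' (fun j => ω j.val) else 0) ∂ν w ∂P z :=
          lintegral_withDensity_eq_lintegral_mul (P z) (humeas.div measurable_const) hRw
        rw [hwd]
        rw [← lintegral_const_mul _ (show Measurable fun w => uStar B A μ w / uStar B A μ z *
            ∫⁻ ω, (if hitTime B ω = (n : ℕ∞) then g' (fun j => ω j.val) else 0) ∂ν w from
          (humeas.div measurable_const).mul hRw)]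
        refine lintegral_congr fun w => ?_
        show uStar B A μ w * _ = uStar B A μ z * (uStar B A μ w / uStar B A μ z * _)
        rw [← mul_assoc, ENNReal.mul_div_cancel (hupos z hzB).ne' (hune z)]
  -- choose the finite-dimensional representatives of `Λ`
  choose G hGm hGe using hΛ
  -- disjointness of the slices
  have hdisj : Pairwise (Function.onFun Disjoint
      fun n : ℕ => {ω : ℕ → 𝒳 | hitTime B ω = (n : ℕ∞) ∧ ω n ∈ A}) := by
    intro m k hmk
    rw [Function.onFun, Set.disjoint_left]
    rintro ω ⟨h1, -⟩ ⟨h2, -⟩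
    exact hmk (Nat.cast_inj.mp (h1.symm.trans h2))
  have hdisjT : Pairwise (Function.onFun Disjoint
      fun n : ℕ => {ω : ℕ → 𝒳 | hitTime B ω = (n : ℕ∞)}) := by
    intro m k hmk
    rw [Function.onFun, Set.disjoint_left]
    intro ω h1 h2
    exact hmk (Nat.cast_inj.mp (h1.symm.trans h2))
  have hSdecomp : {ω : ℕ → 𝒳 | ∃ n : ℕ, hitTime B ω = (n : ℕ∞) ∧ ω n ∈ A}
      = ⋃ n : ℕ, {ω : ℕ → 𝒳 | hitTime B ω = (n : ℕ∞) ∧ ω n ∈ A} := by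
    ext ω; simp
  -- each slice of the numerator
  have hterm : ∀ n : ℕ, ∫⁻ ω in {ω : ℕ → 𝒳 | hitTime B ω = (n : ℕ∞) ∧ ω n ∈ A}, Λ ω ∂μ y
      = ∫⁻ ω, (if hitTime B ω = (n : ℕ∞) ∧ ω n ∈ A then G n (fun i => ω i.val) else 0) ∂μ y := by
    intro n
    rw [← lintegral_indicator (hSn n)]
    refine lintegral_congr fun ω => ?_
    rw [Set.indicator_apply]
    simp only [Set.mem_setOf_eq]
    by_cases h : hitTime B ω = (n : ℕ∞) ∧ ω n ∈ A
    · rw [if_pos h, if_pos h]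
      have hh := hGe n ω
      rw [if_pos h.1] at hh
      exact hh
    · rw [if_neg h, if_neg h]
  have hterm2 : ∀ n : ℕ,
      ∫⁻ ω, (if hitTime B ω = (n : ℕ∞) then G n (fun i => ω i.val) else 0) ∂ν y
      = ∫⁻ ω in {ω : ℕ → 𝒳 | hitTime B ω = (n : ℕ∞)}, Λ ω ∂ν y := by
    intro n
    rw [← lintegral_indicator (measurableSet_hitTime_eq hB n)]
    refine lintegral_congr fun ω => ?_
    rw [Set.indicator_apply]
    simp only [Set.mem_setOf_eq]
    by_cases h : hitTime B ω = (n : ℕ∞)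
    · rw [if_pos h, if_pos h]
      have hh := hGe n ω
      rw [if_pos h] at hh
      exact hh.symm
    · rw [if_neg h, if_neg h]
  -- `ν y` gives full mass to `{T < ∞}`
  have hμSn : ∀ n : ℕ, ∫⁻ ω, (if hitTime B ω = (n : ℕ∞) ∧ ω n ∈ A
        then (1 : ℝ≥0∞) else 0) ∂μ y
      = μ y {ω : ℕ → 𝒳 | hitTime B ω = (n : ℕ∞) ∧ ω n ∈ A} := by
    intro n
    rw [← lintegral_indicator_one (hSn n)]
    refine lintegral_congr fun ω => ?_
    rw [Set.indicator_apply]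
    simp only [Set.mem_setOf_eq, Pi.one_apply]
  have hνTn : ∀ n : ℕ, ∫⁻ ω, (if hitTime B ω = (n : ℕ∞) then (1 : ℝ≥0∞) else 0) ∂ν y
      = ν y {ω : ℕ → 𝒳 | hitTime B ω = (n : ℕ∞)} := by
    intro n
    rw [← lintegral_indicator_one (measurableSet_hitTime_eq hB n)]
    refine lintegral_congr fun ω => ?_
    rw [Set.indicator_apply]
    simp only [Set.mem_setOf_eq, Pi.one_apply]
  have hU : MeasurableSet (⋃ n : ℕ, {ω : ℕ → 𝒳 | hitTime B ω = (n : ℕ∞)}) :=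
    MeasurableSet.iUnion fun n => measurableSet_hitTime_eq hB n
  have hνU : ν y (⋃ n : ℕ, {ω : ℕ → 𝒳 | hitTime B ω = (n : ℕ∞)}) = 1 := by
    have h1 : uStar B A μ y
        = uStar B A μ y * ν y (⋃ n : ℕ, {ω : ℕ → 𝒳 | hitTime B ω = (n : ℕ∞)}) := by
      calc uStar B A μ y
          = ∑' n : ℕ, μ y {ω : ℕ → 𝒳 | hitTime B ω = (n : ℕ∞) ∧ ω n ∈ A} := by
            rw [uStar, hSdecomp]
            exact measure_iUnion hdisj hSn
        _ = ∑' n : ℕ, uStar B A μ y * ν y {ω : ℕ → 𝒳 | hitTime B ω = (n : ℕ∞)} := by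
            refine tsum_congr fun n => ?_
            rw [← hμSn n, key n (fun _ => 1) measurable_const y, hνTn n]
        _ = uStar B A μ y * ∑' n : ℕ, ν y {ω : ℕ → 𝒳 | hitTime B ω = (n : ℕ∞)} :=
            ENNReal.tsum_mul_left
        _ = uStar B A μ y * ν y (⋃ n : ℕ, {ω : ℕ → 𝒳 | hitTime B ω = (n : ℕ∞)}) := by
            rw [measure_iUnion hdisjT fun n => measurableSet_hitTime_eq hB n]
    have := (ENNReal.mul_right_inj (hupos y hy).ne' (hune y)).mp
      (h1.symm.trans (mul_one (uStar B A μ y)).symm)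
    exact this
  have hνUc : ν y (⋃ n : ℕ, {ω : ℕ → 𝒳 | hitTime B ω = (n : ℕ∞)})ᶜ = 0 := by
    have := hνprob y
    rw [measure_compl hU (measure_ne_top _ _), measure_univ, hνU, tsub_self]
  -- assemble everything
  have hnum : ∫⁻ ω in {ω : ℕ → 𝒳 | ∃ n : ℕ, hitTime B ω = (n : ℕ∞) ∧ ω n ∈ A}, Λ ω ∂μ y
      = uStar B A μ y * ∫⁻ ω, Λ ω ∂ν y := by
    rw [hSdecomp, lintegral_iUnion hSn hdisj]
    have h3 : ∀ n : ℕ, ∫⁻ ω in {ω : ℕ → 𝒳 | hitTime B ω = (n : ℕ∞) ∧ ω n ∈ A}, Λ ω ∂μ y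
        = uStar B A μ y * ∫⁻ ω in {ω : ℕ → 𝒳 | hitTime B ω = (n : ℕ∞)}, Λ ω ∂ν y := by
      intro n
      rw [hterm n, key n (G n) (hGm n) y, hterm2 n]
    rw [tsum_congr h3, ENNReal.tsum_mul_left,
      ← lintegral_iUnion (fun n => measurableSet_hitTime_eq hB n) hdisjT]
    congr 1
    have hfull : ∫⁻ ω in (⋃ n : ℕ, {ω : ℕ → 𝒳 | hitTime B ω = (n : ℕ∞)}), Λ ω ∂ν y
        + ∫⁻ ω in (⋃ n : ℕ, {ω : ℕ → 𝒳 | hitTime B ω = (n : ℕ∞)})ᶜ, Λ ω ∂ν y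
        = ∫⁻ ω, Λ ω ∂ν y := lintegral_add_compl Λ hU
    rw [setLIntegral_measure_zero _ _ hνUc, add_zero] at hfull
    exact hfull
  rw [hnum]
  have hden : μ y {ω : ℕ → 𝒳 | ∃ n : ℕ, hitTime B ω = (n : ℕ∞) ∧ ω n ∈ A}
      = uStar B A μ y := rfl
  rw [hden, mul_comm, mul_div_assoc, ENNReal.div_self (hupos y hy).ne' (hune y), mul_one]
end
end

section
/- Under Assumption A, w(y) − v(y) = o(P(X > −y)) as y → −∞; equivalently, (P(X + Z > t) − P(Z > t))/P(X > t) → 0 as t → ∞. -/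
open MeasureTheory ProbabilityTheory Filter Set
open scoped ENNReal NNReal

noncomputable section

/-- The (right) tail function `t ↦ P(X > t)` of a random variable, as a real number. -/
def tail {Ω : Type*} [MeasurableSpace Ω] (μ : Measure Ω) (X : Ω → ℝ) (t : ℝ) : ℝ :=
  (μ {ω | t < X ω}).toReal


section Aux
variable {Ω : Type*} [MeasurableSpace Ω] (μ : Measure Ω) [IsProbabilityMeasure μ]
  (X : Ω → ℝ)

lemma tail_nonneg (t : ℝ) : 0 ≤ tail μ X t := ENNReal.toReal_nonneg

lemma tail_le_one (t : ℝ) : tail μ X t ≤ 1 := by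
  rw [tail, ← ENNReal.toReal_one]
  exact ENNReal.toReal_mono ENNReal.one_ne_top prob_le_one

lemma tail_antitone : Antitone (tail μ X) := by
  intro s t hst
  exact ENNReal.toReal_mono (measure_ne_top μ _)
    (measure_mono (fun ω hω => lt_of_le_of_lt hst hω))

lemma tail_measurable : Measurable (tail μ X) := (tail_antitone μ X).measurable

variable (hint : Integrable X μ)
include hint

lemma integral_tail_eq : ∫ t in Set.Ioi (0:ℝ), tail μ X t = ∫ ω, max (X ω) 0 ∂μ := by
  rw [(hint.pos_part.integral_eq_integral_meas_lt (Eventually.of_forall fun ω => le_max_right _ _))]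
  refine setIntegral_congr_fun measurableSet_Ioi (fun t ht => ?_)
  have : {a | t < max (X a) 0} = {ω | t < X ω} := by
    ext a; simp only [mem_setOf_eq, lt_max_iff]
    exact ⟨fun h => h.resolve_right (fun h0 => absurd h0 (not_lt_of_ge (le_of_lt ht))), Or.inl⟩
  rw [this, tail]
  rfl

lemma tail_integrableOn_Ioi_zero : IntegrableOn (tail μ X) (Set.Ioi (0:ℝ)) := by
  have key := lintegral_eq_lintegral_meas_lt μ
    (f := fun ω => max (X ω) 0) (Eventually.of_forall fun ω => le_max_right _ _)
    hint.pos_part.aemeasurable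
  refine ⟨(tail_measurable μ X).aestronglyMeasurable, ?_⟩
  rw [hasFiniteIntegral_iff_ofReal (Eventually.of_forall fun t => tail_nonneg μ X t)]
  calc ∫⁻ t in Set.Ioi (0:ℝ), ENNReal.ofReal (tail μ X t)
      ≤ ∫⁻ t in Set.Ioi (0:ℝ), μ {ω | t < X ω} := by
        refine lintegral_mono (fun t => ?_)
        exact ENNReal.ofReal_toReal_le
    _ ≤ ∫⁻ t in Set.Ioi (0:ℝ), μ {a | t < max (X a) 0} := by
        refine lintegral_mono (fun t => measure_mono (fun a ha => ?_))
        exact lt_of_lt_of_le (mem_setOf_eq ▸ ha) (le_max_left _ _)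
    _ = ∫⁻ ω, ENNReal.ofReal (max (X ω) 0) ∂μ := key.symm
    _ < ∞ := hint.pos_part.lintegral_lt_top

lemma tail_integrableOn_Ioi (a : ℝ) : IntegrableOn (tail μ X) (Set.Ioi a) := by
  rcases le_or_gt 0 a with h | h
  · exact (tail_integrableOn_Ioi_zero μ X hint).mono_set (Ioi_subset_Ioi h)
  · rw [← Ioc_union_Ioi_eq_Ioi h.le]
    refine IntegrableOn.union ?_ (tail_integrableOn_Ioi_zero μ X hint)
    refine Integrable.mono' (integrable_const 1) ((tail_measurable μ X).aestronglyMeasurable) ?_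
    exact Eventually.of_forall fun t => by
      rw [Real.norm_eq_abs, abs_of_nonneg (tail_nonneg μ X t)]; exact tail_le_one μ X t

end Aux

section B
variable {Ω : Type*} [MeasurableSpace Ω] (μ : Measure Ω) [IsProbabilityMeasure μ]
  (X : Ω → ℝ) (hint : Integrable X μ)
include hint

lemma integral_tail_split (a t : ℝ) (h : a ≤ t) :
    ∫ s in Set.Ioi a, tail μ X s
      = (∫ s in Set.Ioc a t, tail μ X s) + ∫ s in Set.Ioi t, tail μ X s := by
  rw [← setIntegral_union (Ioc_disjoint_Ioi le_rfl) measurableSet_Ioi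
    ((tail_integrableOn_Ioi μ X hint a).mono_set Ioc_subset_Ioi_self)
    (tail_integrableOn_Ioi μ X hint t), Ioc_union_Ioi_eq_Ioi h]

omit hint

lemma tail_integrableOn_Ioc (a b : ℝ) : IntegrableOn (tail μ X) (Set.Ioc a b) := by
  refine Integrable.mono' (integrable_const 1) ((tail_measurable μ X).aestronglyMeasurable) ?_
  exact Eventually.of_forall fun t => by
    rw [Real.norm_eq_abs, abs_of_nonneg (tail_nonneg μ X t)]; exact tail_le_one μ X t

lemma integral_tail_Ioc_le (a b : ℝ) (h : a ≤ b) :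
    ∫ s in Set.Ioc a b, tail μ X s ≤ (b - a) * tail μ X a := by
  have h1 : ∫ s in Set.Ioc a b, tail μ X s ≤ ∫ _ in Set.Ioc a b, tail μ X a := by
    refine setIntegral_mono_on (tail_integrableOn_Ioc μ X a b)
      (integrableOn_const measure_Ioc_lt_top.ne)
      measurableSet_Ioc (fun s hs => tail_antitone μ X hs.1.le)
  rw [setIntegral_const, Measure.real, Real.volume_Ioc, ENNReal.toReal_ofReal (by linarith), smul_eq_mul] at h1
  exact h1

lemma le_integral_tail_Ioc (a b : ℝ) (h : a ≤ b) :
    (b - a) * tail μ X b ≤ ∫ s in Set.Ioc a b, tail μ X s := by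
  have h1 : ∫ _ in Set.Ioc a b, tail μ X b ≤ ∫ s in Set.Ioc a b, tail μ X s := by
    refine setIntegral_mono_on (integrableOn_const measure_Ioc_lt_top.ne)
      (tail_integrableOn_Ioc μ X a b)
      measurableSet_Ioc (fun s hs => tail_antitone μ X hs.2)
  rw [setIntegral_const, Measure.real, Real.volume_Ioc, ENNReal.toReal_ofReal (by linarith), smul_eq_mul] at h1
  exact h1

lemma tail_pos (hpos : ∀ t : ℝ, 0 < μ {ω | t < X ω}) (t : ℝ) : 0 < tail μ X t :=
  ENNReal.toReal_pos (hpos t).ne' (measure_ne_top μ _)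

include hint

lemma tendsto_integral_tail_Ioi :
    Tendsto (fun t => ∫ s in Set.Ioi t, tail μ X s) atTop (nhds 0) := by
  have h0 := intervalIntegral_tendsto_integral_Ioi 0
    (tail_integrableOn_Ioi μ X hint 0) tendsto_id
  have heq : ∀ᶠ t in atTop, (∫ s in Set.Ioi (0:ℝ), tail μ X s) - (∫ s in (0:ℝ)..t, tail μ X s)
      = ∫ s in Set.Ioi t, tail μ X s := by
    filter_upwards [eventually_ge_atTop (0:ℝ)] with t ht
    rw [intervalIntegral.integral_of_le ht, integral_tail_split μ X hint 0 t ht]; ring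
  have := (tendsto_const_nhds (x := ∫ s in Set.Ioi (0:ℝ), tail μ X s)
      (f := atTop)).sub h0
  rw [sub_self] at this
  exact Tendsto.congr' heq this

end B

section E
variable {Ω : Type*} [MeasurableSpace Ω] (μ : Measure Ω) [IsProbabilityMeasure μ]
  (X : Ω → ℝ)

lemma convo_intervalIntegrable (t a b : ℝ) :
    IntervalIntegrable (fun s => tail μ X (t - s) * tail μ X s) volume a b := by
  refine IntervalIntegrable.mono_fun' (g := fun _ => (1:ℝ)) intervalIntegrable_const ?_ ?_
  · exact (((tail_measurable μ X).comp (measurable_const.sub measurable_id)).mul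
      (tail_measurable μ X)).aestronglyMeasurable
  · refine Eventually.of_forall fun s => ?_
    simp only [Real.norm_eq_abs, abs_of_nonneg (mul_nonneg (tail_nonneg μ X _) (tail_nonneg μ X _))]
    exact mul_le_one₀ (tail_le_one μ X _) (tail_nonneg μ X _) (tail_le_one μ X _)

lemma tail_intervalIntegrable (a b : ℝ) :
    IntervalIntegrable (tail μ X) volume a b := by
  refine IntervalIntegrable.mono_fun' (g := fun _ => (1:ℝ)) intervalIntegrable_const
    (tail_measurable μ X).aestronglyMeasurable ?_
  exact Eventually.of_forall fun s => by
    simp only [Real.norm_eq_abs, abs_of_nonneg (tail_nonneg μ X _)]; exact tail_le_one μ X _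

lemma convo_symm (t : ℝ) :
    (∫ s in (0:ℝ)..t, tail μ X (t - s) * tail μ X s)
      = 2 * ∫ s in (0:ℝ)..(t/2), tail μ X (t - s) * tail μ X s := by
  have h1 : (∫ s in (t/2)..t, tail μ X (t - s) * tail μ X s)
      = ∫ s in (0:ℝ)..(t/2), tail μ X (t - s) * tail μ X s := by
    have := intervalIntegral.integral_comp_sub_left
      (a := (0:ℝ)) (b := t/2) (fun s => tail μ X (t - s) * tail μ X s) t
    simp only [sub_sub_cancel] at this
    rw [show t - t/2 = t/2 by ring, sub_zero] at this
    rw [← this]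
    exact intervalIntegral.integral_congr (fun s _ => mul_comm _ _)
  rw [← intervalIntegral.integral_add_adjacent_intervals
    (convo_intervalIntegrable μ X t 0 (t/2)) (convo_intervalIntegrable μ X t (t/2) t), h1]
  ring

end E

section F
variable {Ω : Type*} [MeasurableSpace Ω] (μ : Measure Ω) [IsProbabilityMeasure μ]
  (X : Ω → ℝ) (hint : Integrable X μ) (hpos : ∀ t : ℝ, 0 < μ {ω | t < X ω})
  (hc : Tendsto (fun t => (∫ s in (0:ℝ)..t, tail μ X (t - s) * tail μ X s) / tail μ X t)
    atTop (nhds (2 * ∫ s in Set.Ioi (0:ℝ), tail μ X s)))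
include hint hpos hc

lemma tail_longtail_sub {a : ℝ} (ha : 0 < a) :
    Tendsto (fun t => tail μ X (t - a) / tail μ X t) atTop (nhds 1) := by
  set F := tail μ X with hF
  set Ja := ∫ s in Set.Ioi a, F s with hJa
  have hJa_pos : 0 < Ja := by
    have h1 : (a + 1 - a) * F (a + 1) ≤ ∫ s in Set.Ioc a (a+1), F s :=
      le_integral_tail_Ioc μ X a (a+1) (by linarith)
    have h2 : (0:ℝ) ≤ ∫ s in Set.Ioi (a+1), F s :=
      setIntegral_nonneg measurableSet_Ioi (fun s _ => tail_nonneg μ X s)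
    have h3 := integral_tail_split μ X hint a (a+1) (by linarith)
    have h4 := tail_pos μ X hpos (a+1)
    rw [hJa, h3]; nlinarith
  have hsplit : (∫ s in Set.Ioi (0:ℝ), F s) = (∫ s in (0:ℝ)..a, F s) + Ja := by
    rw [intervalIntegral.integral_of_le ha.le]
    exact integral_tail_split μ X hint 0 a ha.le
  -- the dominating function S
  set S : ℝ → ℝ := fun t =>
    ((∫ s in (0:ℝ)..t, F (t - s) * F s) / F t - 2 * ∫ s in (0:ℝ)..a, F s)
      / (2 * ∫ s in a..(t/2), F s) with hS
  have hden : Tendsto (fun t => 2 * ∫ s in a..(t/2), F s) atTop (nhds (2 * Ja)) := by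
    refine Tendsto.const_mul 2 ?_
    exact (intervalIntegral_tendsto_integral_Ioi a (tail_integrableOn_Ioi μ X hint a)
      (tendsto_id.atTop_div_const two_pos))
  have hnum : Tendsto (fun t => (∫ s in (0:ℝ)..t, F (t - s) * F s) / F t
      - 2 * ∫ s in (0:ℝ)..a, F s) atTop (nhds (2 * Ja)) := by
    have := hc.sub (tendsto_const_nhds (x := 2 * ∫ s in (0:ℝ)..a, F s) (f := atTop))
    convert this using 2
    rw [hsplit]; ring
  have hStend : Tendsto S atTop (nhds 1) := by
    have := hnum.div hden (by positivity)
    rwa [div_self (by positivity)] at this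
  -- eventual bounds
  have hlow : ∀ᶠ t in atTop, 1 ≤ F (t - a) / F t := by
    filter_upwards [eventually_ge_atTop (0:ℝ)] with t _
    rw [le_div_iff₀ (tail_pos μ X hpos t), one_mul]
    exact tail_antitone μ X (by linarith)
  have hup : ∀ᶠ t in atTop, F (t - a) / F t ≤ S t := by
    filter_upwards [eventually_ge_atTop (2*a + 2)] with t ht
    have hta : a ≤ t / 2 := by linarith
    have h2a : 0 < t := by linarith
    have hFt := tail_pos μ X hpos t
    have hIpos : 0 < ∫ s in a..(t/2), F s := by
      have h1 : (t/2 - a) * F (t/2) ≤ ∫ s in Set.Ioc a (t/2), F s :=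
        le_integral_tail_Ioc μ X a (t/2) hta
      rw [intervalIntegral.integral_of_le hta]
      nlinarith [tail_pos μ X hpos (t/2)]
    -- conv lower bound
    have key : 2 * (F t * ∫ s in (0:ℝ)..a, F s) + 2 * (F (t - a) * ∫ s in a..(t/2), F s)
        ≤ ∫ s in (0:ℝ)..t, F (t - s) * F s := by
      rw [convo_symm μ X t,
        ← intervalIntegral.integral_add_adjacent_intervals
          (convo_intervalIntegrable μ X t 0 a) (convo_intervalIntegrable μ X t a (t/2))]
      have b1 : F t * ∫ s in (0:ℝ)..a, F s ≤ ∫ s in (0:ℝ)..a, F (t - s) * F s := by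
        rw [← intervalIntegral.integral_const_mul]
        refine intervalIntegral.integral_mono_on ha.le
          ((tail_intervalIntegrable μ X 0 a).const_mul _)
          (convo_intervalIntegrable μ X t 0 a) (fun s hs => ?_)
        exact mul_le_mul_of_nonneg_right (tail_antitone μ X (by linarith [hs.1]))
          (tail_nonneg μ X s)
      have b2 : F (t - a) * ∫ s in a..(t/2), F s ≤ ∫ s in a..(t/2), F (t - s) * F s := by
        rw [← intervalIntegral.integral_const_mul]
        refine intervalIntegral.integral_mono_on hta
          ((tail_intervalIntegrable μ X a (t/2)).const_mul _)
          (convo_intervalIntegrable μ X t a (t/2)) (fun s hs => ?_)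
        exact mul_le_mul_of_nonneg_right (tail_antitone μ X (by linarith [hs.1]))
          (tail_nonneg μ X s)
      linarith
    rw [hS, le_div_iff₀ (by positivity)]
    have expand : (2 * (F t * ∫ s in (0:ℝ)..a, F s) + 2 * (F (t - a) * ∫ s in a..(t/2), F s)) / F t
        ≤ (∫ s in (0:ℝ)..t, F (t - s) * F s) / F t := by
      exact div_le_div_of_nonneg_right key hFt.le
    rw [add_div] at expand
    have e1 : 2 * (F t * ∫ s in (0:ℝ)..a, F s) / F t = 2 * ∫ s in (0:ℝ)..a, F s := by
      rw [mul_comm (F t), mul_div_assoc, mul_div_assoc, div_self (show F t ≠ 0 from hFt.ne'), mul_one]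
    have e2 : 2 * (F (t - a) * ∫ s in a..(t/2), F s) / F t
        = F (t - a) / F t * (2 * ∫ s in a..(t/2), F s) := by
      field_simp
    rw [e1, e2] at expand
    linarith
  exact tendsto_of_tendsto_of_tendsto_of_le_of_le' tendsto_const_nhds hStend hlow hup

lemma tail_ratio_tendsto {B : ℝ} (hB : 0 ≤ B) :
    Tendsto (fun t => tail μ X (t + B) / tail μ X t) atTop (nhds 1) := by
  rcases eq_or_lt_of_le hB with rfl | hB'
  · refine Tendsto.congr (fun t => ?_) tendsto_const_nhds
    rw [add_zero, div_self (tail_pos μ X hpos t).ne']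
  · have h := (tail_longtail_sub μ X hint hpos hc hB').comp
      (tendsto_atTop_add_const_right atTop B tendsto_id)
    have h2 : Tendsto (fun t => tail μ X t / tail μ X (t + B)) atTop (nhds 1) := by
      refine h.congr (fun t => ?_)
      simp only [Function.comp_apply, id_eq, add_sub_cancel_right]
    have h3 := h2.inv₀ one_ne_zero
    rw [inv_one] at h3
    refine h3.congr (fun t => ?_)
    rw [inv_div]

end F

section G
variable {Ω : Type*} [MeasurableSpace Ω] (μ : Measure Ω) [IsProbabilityMeasure μ]
  (X Z : Ω → ℝ) (hX : Measurable X) (hZ : Measurable Z)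
  (hindep : IndepFun X Z μ)
include hX hZ hindep

lemma tail_add_eq (t : ℝ) :
    tail μ (fun ω => X ω + Z ω) t = ∫ ω, tail μ Z (t - X ω) ∂μ := by
  haveI : IsProbabilityMeasure (μ.map X) := Measure.isProbabilityMeasure_map hX.aemeasurable
  have hmap : μ.map (fun ω => (X ω, Z ω)) = (μ.map X).prod (μ.map Z) :=
    (indepFun_iff_map_prod_eq_prod_map_map hX.aemeasurable hZ.aemeasurable).mp hindep
  have hset : MeasurableSet {p : ℝ × ℝ | t < p.1 + p.2} :=
    measurableSet_lt measurable_const (measurable_fst.add measurable_snd)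
  have h1 : μ {ω | t < X ω + Z ω}
      = ∫⁻ x, μ {ω | t - x < Z ω} ∂(μ.map X) := by
    have : μ {ω | t < X ω + Z ω}
        = μ.map (fun ω => (X ω, Z ω)) {p : ℝ × ℝ | t < p.1 + p.2} := by
      rw [Measure.map_apply (hX.prodMk hZ) hset]; rfl
    rw [this, hmap, Measure.prod_apply hset]
    refine lintegral_congr (fun x => ?_)
    have : (Prod.mk x ⁻¹' {p : ℝ × ℝ | t < p.1 + p.2}) = Set.Ioi (t - x) := by
      ext z; simp [sub_lt_iff_lt_add']
    rw [this, Measure.map_apply hZ measurableSet_Ioi]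
    rfl
  have hmono : Monotone (fun x => μ {ω | t - x < Z ω}) := by
    intro x y hxy
    refine measure_mono (fun ω hω => ?_)
    simp only [mem_setOf_eq] at *
    linarith
  have h2 : ∫ ω, tail μ Z (t - X ω) ∂μ
      = ∫ x, tail μ Z (t - x) ∂(μ.map X) := by
    rw [integral_map hX.aemeasurable]
    exact ((tail_measurable μ Z).comp (measurable_const.sub measurable_id)).aestronglyMeasurable
  rw [tail, h1, h2]
  rw [← integral_toReal (hmono.measurable.aemeasurable)
    (Eventually.of_forall (fun x => lt_of_le_of_lt prob_le_one ENNReal.one_lt_top))]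
  rfl

end G

section H
variable {Ω : Type*} [MeasurableSpace Ω] (μ : Measure Ω) [IsProbabilityMeasure μ]
  (X : Ω → ℝ) (hX : Measurable X) (hint : Integrable X μ)
include hX hint

lemma fubini_key (t : ℝ) (ht : 0 ≤ t) :
    ∫ ω in {ω | 0 ≤ X ω},
        ((∫ s in Set.Ioi (max (t - X ω) 0), tail μ X s) - ∫ s in Set.Ioi t, tail μ X s) ∂μ
      = ∫ s in (0:ℝ)..t, tail μ X (t - s) * tail μ X s := by
  set F := tail μ X with hF
  have hS : MeasurableSet {ω | 0 ≤ X ω} := measurableSet_le measurable_const hX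
  -- pointwise rewrite
  have step1 : ∀ ω ∈ {ω | 0 ≤ X ω},
      ((∫ s in Set.Ioi (max (t - X ω) 0), F s) - ∫ s in Set.Ioi t, F s)
        = ∫ s in Set.Ioc 0 t, (Set.Ioi (t - X ω)).indicator F s := by
    intro ω hω
    have hω' : 0 ≤ X ω := hω
    have ha : max (t - X ω) 0 ≤ t := max_le (by linarith) ht
    have hsplit := integral_tail_split μ X hint (max (t - X ω) 0) t ha
    have hseteq : Set.Ioc (max (t - X ω) 0) t = Set.Ioc 0 t ∩ Set.Ioi (t - X ω) := by
      ext s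
      simp only [mem_Ioc, mem_inter_iff, mem_Ioi, max_lt_iff]
      tauto
    rw [setIntegral_indicator measurableSet_Ioi, ← hseteq, hsplit]
    ring
  rw [setIntegral_congr_fun hS step1]
  -- Fubini
  haveI : IsFiniteMeasure (volume.restrict (Set.Ioc (0:ℝ) t)) :=
    ⟨by rw [Measure.restrict_apply_univ]; exact measure_Ioc_lt_top⟩
  have hA : MeasurableSet {q : Ω × ℝ | t - X q.1 < q.2} :=
    measurableSet_lt (measurable_const.sub (hX.comp measurable_fst)) measurable_snd
  have hmeas : Measurable (fun q : Ω × ℝ => (Set.Ioi (t - X q.1)).indicator F q.2) := by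
    have : (fun q : Ω × ℝ => (Set.Ioi (t - X q.1)).indicator F q.2)
        = {q : Ω × ℝ | t - X q.1 < q.2}.indicator (fun q => F q.2) := by
      funext q
      by_cases h : t - X q.1 < q.2
      · rw [Set.indicator_of_mem (mem_Ioi.mpr h), Set.indicator_of_mem (by exact h)]
      · rw [Set.indicator_of_notMem (fun hc => h (mem_Ioi.mp hc)),
          Set.indicator_of_notMem (by exact h)]
    rw [this]
    exact ((tail_measurable μ X).comp measurable_snd).indicator hA
  have hintg : Integrable (fun q : Ω × ℝ => (Set.Ioi (t - X q.1)).indicator F q.2)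
      ((μ.restrict {ω | 0 ≤ X ω}).prod (volume.restrict (Set.Ioc 0 t))) := by
    refine Integrable.mono' (integrable_const 1) hmeas.aestronglyMeasurable ?_
    refine Eventually.of_forall fun q => ?_
    rw [Real.norm_eq_abs]
    refine abs_le.mpr ⟨?_, ?_⟩
    · refine le_trans (by norm_num) (Set.indicator_nonneg (fun s _ => tail_nonneg μ X s) _)
    · refine Set.indicator_le' (fun s _ => tail_le_one μ X s) (fun s _ => zero_le_one) _
  have swap := integral_integral_swap (f := fun ω s => (Set.Ioi (t - X ω)).indicator F s) hintg
  rw [swap]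
  -- inner integral
  have step2 : ∀ s ∈ Set.Ioc (0:ℝ) t,
      (∫ ω in {ω | 0 ≤ X ω}, (Set.Ioi (t - X ω)).indicator F s ∂μ) = F (t - s) * F s := by
    intro s hs
    have h1 : ∀ ω, (Set.Ioi (t - X ω)).indicator F s
        = ({ω | t - s < X ω}).indicator (fun _ => F s) ω := by
      intro ω
      by_cases h : t - X ω < s
      · rw [Set.indicator_of_mem (mem_Ioi.mpr h),
          Set.indicator_of_mem (by simp only [mem_setOf_eq]; linarith)]
      · rw [Set.indicator_of_notMem (fun hc => h (mem_Ioi.mp hc)),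
          Set.indicator_of_notMem (by simp only [mem_setOf_eq]; intro hc; exact h (by linarith))]
    simp_rw [h1]
    rw [setIntegral_indicator (measurableSet_lt measurable_const hX), setIntegral_const]
    have hsub : {ω | t - s < X ω} ⊆ {ω | 0 ≤ X ω} := by
      intro ω hω
      simp only [mem_setOf_eq] at *
      have : 0 ≤ t - s := by linarith [hs.2]
      linarith
    rw [Set.inter_eq_self_of_subset_right hsub]
    rw [smul_eq_mul]
    rfl
  rw [setIntegral_congr_fun measurableSet_Ioc step2, intervalIntegral.integral_of_le ht]

end H

section I
variable {Ω : Type*} [MeasurableSpace Ω] (μ : Measure Ω) [IsProbabilityMeasure μ]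
  (X : Ω → ℝ) (hX : Measurable X) (hint : Integrable X μ)
include hX hint

lemma setIntegral_pos_part' : ∫ ω in {ω | 0 ≤ X ω}, X ω ∂μ = ∫ ω, max (X ω) 0 ∂μ := by
  have hS : MeasurableSet {ω | 0 ≤ X ω} := measurableSet_le measurable_const hX
  rw [← integral_add_compl hS hint.pos_part]
  have h1 : ∫ ω in {ω | 0 ≤ X ω}, max (X ω) 0 ∂μ = ∫ ω in {ω | 0 ≤ X ω}, X ω ∂μ :=
    setIntegral_congr_fun hS (fun ω hω => max_eq_left hω)
  have h2 : ∫ ω in {ω | 0 ≤ X ω}ᶜ, max (X ω) 0 ∂μ = 0 := by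
    rw [setIntegral_congr_fun hS.compl (g := fun _ => (0:ℝ))
      (fun ω hω => max_eq_right (le_of_lt (not_le.mp hω)))]
    simp
  rw [h1, h2, add_zero]

lemma setIntegral_neg_part' : ∫ ω in {ω | X ω < 0}, (-X ω) ∂μ = ∫ ω, max (-X ω) 0 ∂μ := by
  have hS : MeasurableSet {ω | X ω < 0} := measurableSet_lt hX measurable_const
  have := integral_add_compl hS hint.neg.pos_part (f := fun ω => max (-X ω) 0)
  rw [← this]
  have h1 : ∫ ω in {ω | X ω < 0}, max (-X ω) 0 ∂μ = ∫ ω in {ω | X ω < 0}, (-X ω) ∂μ :=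
    setIntegral_congr_fun hS (fun ω hω => max_eq_left (by simp only [mem_setOf_eq] at hω; linarith))
  have h2 : ∫ ω in {ω | X ω < 0}ᶜ, max (-X ω) 0 ∂μ = 0 := by
    rw [setIntegral_congr_fun hS.compl (g := fun _ => (0:ℝ))
      (fun ω hω => max_eq_right (by simp only [mem_compl_iff, mem_setOf_eq, not_lt] at hω; linarith))]
    simp
  rw [h1, h2, add_zero]

lemma pos_trunc_tendsto :
    Tendsto (fun n : ℕ => ∫ ω in {ω | 0 ≤ X ω ∧ X ω ≤ (n:ℝ)}, X ω ∂μ) atTop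
      (nhds (∫ ω, max (X ω) 0 ∂μ)) := by
  have hSm : ∀ n : ℕ, MeasurableSet {ω | 0 ≤ X ω ∧ X ω ≤ (n:ℝ)} := fun n =>
    (measurableSet_le measurable_const hX).inter (measurableSet_le hX measurable_const)
  have hmono : Monotone (fun n : ℕ => {ω | 0 ≤ X ω ∧ X ω ≤ (n:ℝ)}) := by
    intro a b hab ω hω
    exact ⟨hω.1, le_trans hω.2 (by exact_mod_cast hab)⟩
  have hUnion : (⋃ n : ℕ, {ω | 0 ≤ X ω ∧ X ω ≤ (n:ℝ)}) = {ω | 0 ≤ X ω} := by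
    ext ω
    simp only [mem_iUnion, mem_setOf_eq]
    exact ⟨fun ⟨n, hn⟩ => hn.1, fun h => (exists_nat_ge (X ω)).elim (fun n hn => ⟨n, h, hn⟩)⟩
  have key := tendsto_setIntegral_of_monotone hSm hmono
    (f := X) (by rw [hUnion]; exact hint.integrableOn)
  rw [hUnion, setIntegral_pos_part' μ X hX hint] at key
  exact key

lemma neg_trunc_tendsto :
    Tendsto (fun n : ℕ => ∫ ω in {ω | -(n:ℝ) ≤ X ω ∧ X ω < 0}, (-X ω) ∂μ) atTop
      (nhds (∫ ω, max (-X ω) 0 ∂μ)) := by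
  have hSm : ∀ n : ℕ, MeasurableSet {ω | -(n:ℝ) ≤ X ω ∧ X ω < 0} := fun n =>
    (measurableSet_le measurable_const hX).inter (measurableSet_lt hX measurable_const)
  have hmono : Monotone (fun n : ℕ => {ω | -(n:ℝ) ≤ X ω ∧ X ω < 0}) := by
    intro a b hab ω hω
    refine ⟨le_trans ?_ hω.1, hω.2⟩
    have : (a:ℝ) ≤ b := by exact_mod_cast hab
    linarith
  have hUnion : (⋃ n : ℕ, {ω | -(n:ℝ) ≤ X ω ∧ X ω < 0}) = {ω | X ω < 0} := by
    ext ω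
    simp only [mem_iUnion, mem_setOf_eq]
    refine ⟨fun ⟨n, hn⟩ => hn.2, fun h => ?_⟩
    obtain ⟨n, hn⟩ := exists_nat_ge (-X ω)
    exact ⟨n, by linarith, h⟩
  have key := tendsto_setIntegral_of_monotone hSm hmono
    (f := fun ω => -X ω) (by rw [hUnion]; exact hint.neg.integrableOn)
  rw [hUnion, setIntegral_neg_part' μ X hX hint] at key
  exact key

end I

set_option maxHeartbeats 2000000 in
/-- under Assumption A (`X ∈ S*`), with `Z` having the integrated tail
distribution, `P(X + Z > t) − P(Z > t) = o(P(X > t))` as `t → ∞`. -/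
theorem statement9 {Ω : Type*} [MeasurableSpace Ω] (μ : Measure Ω)
    [IsProbabilityMeasure μ]
    (X Z : Ω → ℝ) (hX : Measurable X) (hZ : Measurable Z)
    (hindep : IndepFun X Z μ)
    (hint : Integrable X μ) (hneg : ∫ ω, X ω ∂μ < 0)
    (hpos : ∀ t : ℝ, 0 < μ {ω | t < X ω})
    -- Assumption A: `X⁺ ∈ S*`
    (hSstar : Tendsto (fun t => (∫ s in (0:ℝ)..t, tail μ X (t - s) * tail μ X s) /
      (2 * (∫ ω, max (X ω) 0 ∂μ) * tail μ X t)) atTop (nhds 1))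
    -- `Z ≥ 0` has the integrated-tail distribution of `X`
    (hZnn : ∀ ω, 0 ≤ Z ω)
    (hZtail : ∀ t : ℝ, 0 ≤ t →
      tail μ Z t = min (|∫ ω, X ω ∂μ|⁻¹ * ∫ s in Set.Ioi t, tail μ X s) 1) :
    Tendsto (fun t => (tail μ (fun ω => X ω + Z ω) t - tail μ Z t) / tail μ X t)
      atTop (nhds 0) := by
  have hcompl : {ω | X ω < 0}ᶜ = {ω | 0 ≤ X ω} := by ext ω; simp [not_lt]
  set F := tail μ X with hFdef
  set G := tail μ Z with hGdef
  set I : ℝ → ℝ := fun a => ∫ s in Set.Ioi a, tail μ X s with hIdef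
  set p : ℝ := ∫ ω, max (X ω) 0 ∂μ with hpdef
  set q : ℝ := ∫ ω, max (-X ω) 0 ∂μ with hqdef
  set m : ℝ := -∫ ω, X ω ∂μ with hmdef
  have hm_pos : 0 < m := by rw [hmdef]; linarith
  have hminv_pos : 0 < m⁻¹ := inv_pos.mpr hm_pos
  have habs : |∫ ω, X ω ∂μ| = m := abs_of_neg hneg
  have hFapp : ∀ y : ℝ, tail μ X y = F y := fun _ => rfl
  have hIapp : ∀ y : ℝ, (∫ s in Set.Ioi y, F s) = I y := fun _ => rfl
  have hFpos : ∀ t, 0 < F t := tail_pos μ X hpos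
  have hFanti : Antitone F := tail_antitone μ X
  have hGanti : Antitone G := tail_antitone μ Z
  have hG01 : ∀ t, 0 ≤ G t := tail_nonneg μ Z
  have hGle1 : ∀ t, G t ≤ 1 := tail_le_one μ Z
  have hpq : ∫ ω, X ω ∂μ = p - q := by
    rw [hpdef, hqdef, ← integral_sub hint.pos_part
      (show Integrable (fun ω => max (-X ω) 0) μ from hint.neg.pos_part)]
    refine integral_congr_ae (Eventually.of_forall fun ω => ?_)
    show X ω = max (X ω) 0 - max (-X ω) 0
    rcases le_total (X ω) 0 with h | h
    · rw [max_eq_right h, max_eq_left (by linarith : (0:ℝ) ≤ -X ω)]; ring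
    · rw [max_eq_left h, max_eq_right (by linarith : -X ω ≤ 0)]; ring
  have hqm : q = p + m := by rw [hmdef, hpq]; ring
  have hp_eq : I 0 = p := by rw [hIdef, hpdef]; exact integral_tail_eq μ X hint
  have hInn : ∀ a, 0 ≤ I a := fun a =>
    setIntegral_nonneg measurableSet_Ioi (fun s _ => tail_nonneg μ X s)
  have hIsplit : ∀ a t : ℝ, a ≤ t → I a - I t = ∫ s in Set.Ioc a t, F s := by
    intro a t h
    have := integral_tail_split μ X hint a t h
    rw [hIdef]
    simp only [hFdef]
    linarith [this]
  have hIanti : Antitone I := by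
    intro a b hab
    have h1 := hIsplit a b hab
    have h2 : 0 ≤ ∫ s in Set.Ioc a b, F s :=
      setIntegral_nonneg measurableSet_Ioc (fun s _ => tail_nonneg μ X s)
    linarith
  have hp_pos : 0 < p := by
    have h1 := le_integral_tail_Ioc μ X 0 1 zero_le_one
    have h2 := hIsplit 0 1 zero_le_one
    have h3 := hInn 1
    have h4 := hFpos 1
    simp only [hFdef] at h1 h2 ⊢
    rw [← hp_eq]
    nlinarith
  have hI_tendsto : Tendsto I atTop (nhds 0) := tendsto_integral_tail_Ioi μ X hint
  obtain ⟨T, hT0, hTm⟩ : ∃ T : ℝ, 0 ≤ T ∧ ∀ t, T ≤ t → I t ≤ m := by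
    obtain ⟨T0, h⟩ := eventually_atTop.mp (hI_tendsto.eventually (eventually_le_nhds hm_pos))
    exact ⟨max T0 0, le_max_right _ _, fun t ht => h t (le_trans (le_max_left _ _) ht)⟩
  have hGm : ∀ t, T ≤ t → G t = m⁻¹ * I t := by
    intro t ht
    rw [hZtail t (le_trans hT0 ht), habs, hIapp, min_eq_left]
    calc m⁻¹ * I t ≤ m⁻¹ * m := mul_le_mul_of_nonneg_left (hTm t ht) hminv_pos.le
      _ = 1 := inv_mul_cancel₀ hm_pos.ne'
  have hGzero : ∀ t, 0 ≤ t → G t ≤ m⁻¹ * I t := by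
    intro t ht
    rw [hZtail t ht, habs, hIapp]
    exact min_le_left _ _
  have hGone : ∀ s : ℝ, s < 0 → G s = 1 := by
    intro s hs
    show (μ {ω | s < Z ω}).toReal = 1
    have : {ω | s < Z ω} = Set.univ := eq_univ_of_forall fun ω => lt_of_lt_of_le hs (hZnn ω)
    rw [this, measure_univ, ENNReal.toReal_one]
  have hGtend : Tendsto G atTop (nhds 0) := by
    have h1 : Tendsto (fun t => m⁻¹ * I t) atTop (nhds 0) := by
      simpa using hI_tendsto.const_mul m⁻¹
    refine Tendsto.congr' ?_ h1
    filter_upwards [eventually_ge_atTop T] with t ht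
    exact (hGm t ht).symm
  have hconv : Tendsto (fun t => (∫ s in (0:ℝ)..t, F (t - s) * F s) / F t)
      atTop (nhds (2 * I 0)) := by
    have h1 := hSstar.mul_const (2 * p)
    rw [one_mul] at h1
    rw [hp_eq]
    refine h1.congr (fun t => ?_)
    have := (hFpos t).ne'
    field_simp
  have hratio : ∀ B : ℝ, 0 ≤ B → Tendsto (fun t => F (t + B) / F t) atTop (nhds 1) := by
    intro B hB
    exact tail_ratio_tendsto μ X hint hpos hconv hB
  have hGcomp_int : ∀ t : ℝ, Integrable (fun ω => G (t - X ω)) μ := by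
    intro t
    refine Integrable.mono' (integrable_const 1)
      (((tail_measurable μ Z).comp (measurable_const.sub hX)).aestronglyMeasurable) ?_
    refine Eventually.of_forall fun ω => ?_
    rw [Real.norm_eq_abs, abs_of_nonneg (hG01 _)]
    exact hGle1 _
  have hht : ∀ t : ℝ, Integrable (fun ω => G (t - X ω) - G t) μ :=
    fun t => (hGcomp_int t).sub (integrable_const _)
  set D : ℝ → ℝ := fun t => ∫ ω, (G (t - X ω) - G t) ∂μ with hDdef
  have hD : ∀ t : ℝ, tail μ (fun ω => X ω + Z ω) t - G t = D t := by
    intro t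
    have hadd : tail μ (fun ω => X ω + Z ω) t = ∫ ω, G (t - X ω) ∂μ :=
      tail_add_eq μ X Z hX hZ hindep t
    have hD0 : D t = ∫ ω, (G (t - X ω) - G t) ∂μ := rfl
    rw [hD0, integral_sub (hGcomp_int t) (integrable_const _), integral_const, Measure.real, measure_univ,
      ENNReal.toReal_one, one_smul, hadd]
  -- measurable sets
  have hS0 : MeasurableSet {ω | X ω < 0} := measurableSet_lt hX measurable_const
  have hSnn : MeasurableSet {ω | 0 ≤ X ω} := measurableSet_le measurable_const hX
  have hStopm : ∀ t : ℝ, MeasurableSet {ω | t < X ω} := fun t => measurableSet_lt measurable_const hX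
  have hAtm : ∀ c : ℝ, MeasurableSet {ω | 0 ≤ X ω ∧ X ω ≤ c} := fun c =>
    hSnn.inter (measurableSet_le hX measurable_const)
  have hUBm : ∀ B : ℝ, MeasurableSet {ω | -B ≤ X ω ∧ X ω < 0} := fun B =>
    (measurableSet_le measurable_const hX).inter hS0
  -- decomposition of {0 ≤ X}
  have hsplit2 : ∀ t : ℝ, 0 ≤ t → ∀ g : Ω → ℝ, Integrable g μ →
      ∫ ω in {ω | 0 ≤ X ω}, g ω ∂μ
        = (∫ ω in {ω | 0 ≤ X ω ∧ X ω ≤ t}, g ω ∂μ) + ∫ ω in {ω | t < X ω}, g ω ∂μ := by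
    intro t ht g hg
    have hset : {ω | 0 ≤ X ω} = {ω | 0 ≤ X ω ∧ X ω ≤ t} ∪ {ω | t < X ω} := by
      ext ω
      simp only [mem_setOf_eq, mem_union]
      constructor
      · intro h
        rcases le_or_gt (X ω) t with h' | h'
        · exact Or.inl ⟨h, h'⟩
        · exact Or.inr h'
      · rintro (⟨h, _⟩ | h)
        · exact h
        · linarith
    have hdisj : Disjoint {ω | 0 ≤ X ω ∧ X ω ≤ t} {ω | t < X ω} := by
      rw [Set.disjoint_left]
      intro ω h1 h2
      simp only [mem_setOf_eq] at h1 h2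
      linarith [h1.2]
    rw [hset, setIntegral_union hdisj (hStopm t) (hg.integrableOn) (hg.integrableOn)]
  have hsplitS0 : ∀ B : ℝ, 0 ≤ B → ∀ g : Ω → ℝ, Integrable g μ →
      ∫ ω in {ω | X ω < 0}, g ω ∂μ
        = (∫ ω in {ω | -B ≤ X ω ∧ X ω < 0}, g ω ∂μ) + ∫ ω in {ω | X ω < -B}, g ω ∂μ := by
    intro B hB g hg
    have hset : {ω | X ω < 0} = {ω | -B ≤ X ω ∧ X ω < 0} ∪ {ω | X ω < -B} := by
      ext ω
      simp only [mem_setOf_eq, mem_union]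
      constructor
      · intro h
        rcases le_or_gt (-B) (X ω) with h' | h'
        · exact Or.inl ⟨h', h⟩
        · exact Or.inr h'
      · rintro (⟨_, h⟩ | h)
        · exact h
        · linarith
    have hdisj : Disjoint {ω | -B ≤ X ω ∧ X ω < 0} {ω | X ω < -B} := by
      rw [Set.disjoint_left]
      intro ω h1 h2
      simp only [mem_setOf_eq] at h1 h2
      linarith [h1.1]
    rw [hset, setIntegral_union hdisj (measurableSet_lt hX measurable_const)
      (hg.integrableOn) (hg.integrableOn)]
  -- ∫ over {t < X} of h equals (1 - G t) * F t
  have hStopval : ∀ t : ℝ, 0 ≤ t →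
      ∫ ω in {ω | t < X ω}, (G (t - X ω) - G t) ∂μ = (1 - G t) * F t := by
    intro t ht
    have : ∀ ω ∈ {ω | t < X ω}, G (t - X ω) - G t = 1 - G t := by
      intro ω hω
      simp only [mem_setOf_eq] at hω
      rw [hGone (t - X ω) (by linarith)]
    rw [setIntegral_congr_fun (hStopm t) this, setIntegral_const, smul_eq_mul, mul_comm]
    rfl
  refine Tendsto.congr (fun t => by rw [hD t]) ?_
  rw [tendsto_order]
  constructor
  · -- LOWER BOUND: ∀ a < 0, eventually a < D t / F t
    intro a ha
    obtain ⟨c, hc⟩ : ∃ c : ℕ, p + m * a / 2 < ∫ ω in {ω | 0 ≤ X ω ∧ X ω ≤ (c:ℝ)}, X ω ∂μ := by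
      have htr := pos_trunc_tendsto μ X hX hint
      have hlt : p + m * a / 2 < p := by nlinarith
      rw [← hpdef] at htr
      exact (htr.eventually (eventually_gt_nhds hlt)).exists
    set Pc := ∫ ω in {ω | 0 ≤ X ω ∧ X ω ≤ (c:ℝ)}, X ω ∂μ with hPcdef
    have hψ : Tendsto (fun t => m⁻¹ * Pc - m⁻¹ * q + (1 - G t)) atTop
        (nhds (m⁻¹ * Pc - m⁻¹ * q + 1)) := by
      have h2 := (tendsto_const_nhds (α := ℝ) (f := atTop) (x := (1:ℝ))).sub hGtend
      rw [sub_zero] at h2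
      have := (tendsto_const_nhds (α := ℝ) (f := atTop) (x := m⁻¹ * Pc - m⁻¹ * q)).add h2
      exact this
    have hlim : a < m⁻¹ * Pc - m⁻¹ * q + 1 := by
      have h1 : m⁻¹ * (p + m * a / 2) < m⁻¹ * Pc := mul_lt_mul_of_pos_left hc hminv_pos
      have h2 : m⁻¹ * q = m⁻¹ * p + 1 := by
        rw [hqm, mul_add, inv_mul_cancel₀ hm_pos.ne']
      have h3 : m⁻¹ * (p + m * a / 2) = m⁻¹ * p + a / 2 := by
        rw [mul_add]
        congr 1
        rw [show m * a / 2 = m * (a/2) by ring, ← mul_assoc, inv_mul_cancel₀ hm_pos.ne', one_mul]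
      linarith
    filter_upwards [hψ.eventually (eventually_gt_nhds hlim),
      eventually_ge_atTop (T + (c:ℝ) + 1)] with t hψt htT
    have hcnn : (0:ℝ) ≤ (c:ℝ) := Nat.cast_nonneg c
    have ht0 : (0:ℝ) ≤ t := by linarith
    have htT' : T ≤ t := by linarith
    -- piece (2): lower bound on the negative part
    have hXS0 : ∫ ω in {ω | X ω < 0}, X ω ∂μ = -q := by
      have h1 : ∫ ω in {ω | X ω < 0}, (-X ω) ∂μ = q := by
        rw [hqdef]; exact setIntegral_neg_part' μ X hX hint
      have h2 : ∫ ω in {ω | X ω < 0}, (-X ω) ∂μ = -∫ ω in {ω | X ω < 0}, X ω ∂μ := by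
        exact integral_neg _
      linarith
    have hb1 : m⁻¹ * F t * (-q) ≤ ∫ ω in {ω | X ω < 0}, (G (t - X ω) - G t) ∂μ := by
      have hpt : ∀ ω ∈ {ω | X ω < 0}, m⁻¹ * F t * X ω ≤ G (t - X ω) - G t := by
        intro ω hω
        simp only [mem_setOf_eq] at hω
        have h1 : t ≤ t - X ω := by linarith
        have h2 := hIsplit t (t - X ω) h1
        have h3 := integral_tail_Ioc_le μ X t (t - X ω) h1
        simp only [hFapp] at h3
        have h4 : G (t - X ω) - G t = m⁻¹ * I (t - X ω) - m⁻¹ * I t := by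
          rw [hGm (t - X ω) (by linarith), hGm t htT']
        have h9 : m⁻¹ * (I t - I (t - X ω)) ≤ m⁻¹ * ((t - X ω - t) * F t) := by
          rw [h2]
          exact mul_le_mul_of_nonneg_left h3 hminv_pos.le
        have h10 : m⁻¹ * (I t - I (t - X ω)) = m⁻¹ * I t - m⁻¹ * I (t - X ω) := by ring
        have h11 : m⁻¹ * ((t - X ω - t) * F t) = -(m⁻¹ * F t * X ω) := by ring
        rw [h10, h11] at h9
        linarith [h4, h9]
      have hmono := setIntegral_mono_on
        ((hint.const_mul (m⁻¹ * F t)).integrableOn) ((hht t).integrableOn) hS0 hpt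
      rw [integral_const_mul, hXS0] at hmono
      exact hmono
    -- piece (3): lower bound on the nonnegative part
    have hb2 : m⁻¹ * F t * Pc + (1 - G t) * F t
        ≤ ∫ ω in {ω | 0 ≤ X ω}, (G (t - X ω) - G t) ∂μ := by
      rw [hsplit2 t ht0 _ (hht t)]
      have hb21 : m⁻¹ * F t * Pc
          ≤ ∫ ω in {ω | 0 ≤ X ω ∧ X ω ≤ (c:ℝ)}, (G (t - X ω) - G t) ∂μ := by
        have hpt : ∀ ω ∈ {ω | 0 ≤ X ω ∧ X ω ≤ (c:ℝ)},
            m⁻¹ * F t * X ω ≤ G (t - X ω) - G t := by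
          intro ω hω
          simp only [mem_setOf_eq] at hω
          have h1 : t - X ω ≤ t := by linarith [hω.1]
          have h2 := hIsplit (t - X ω) t h1
          have h3 := le_integral_tail_Ioc μ X (t - X ω) t h1
          simp only [hFapp] at h3
          have h4 : G (t - X ω) - G t = m⁻¹ * I (t - X ω) - m⁻¹ * I t := by
            rw [hGm (t - X ω) (by linarith [hω.2]), hGm t htT']
          have h9 : m⁻¹ * ((t - (t - X ω)) * F t) ≤ m⁻¹ * (I (t - X ω) - I t) := by
            rw [h2]
            exact mul_le_mul_of_nonneg_left h3 hminv_pos.le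
          have h10 : m⁻¹ * (I (t - X ω) - I t) = m⁻¹ * I (t - X ω) - m⁻¹ * I t := by ring
          have h11 : m⁻¹ * ((t - (t - X ω)) * F t) = m⁻¹ * F t * X ω := by ring
          rw [h10, h11] at h9
          linarith [h4, h9]
        have hmono := setIntegral_mono_on
          ((hint.const_mul (m⁻¹ * F t)).integrableOn) ((hht t).integrableOn) (hAtm (c:ℝ)) hpt
        rw [integral_const_mul, ← hPcdef] at hmono
        exact hmono
      have hb22 : (∫ ω in {ω | 0 ≤ X ω ∧ X ω ≤ (c:ℝ)}, (G (t - X ω) - G t) ∂μ)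
          ≤ ∫ ω in {ω | 0 ≤ X ω ∧ X ω ≤ t}, (G (t - X ω) - G t) ∂μ := by
        refine setIntegral_mono_set ((hht t).integrableOn) ?_ ?_
        · rw [EventuallyLE, ae_restrict_iff' (hAtm t)]
          refine Eventually.of_forall fun ω hω => ?_
          simp only [mem_setOf_eq] at hω
          simp only [Pi.zero_apply, sub_nonneg]
          exact hGanti (by linarith [hω.1])
        · refine HasSubset.Subset.eventuallyLE (fun ω hω => ?_)
          simp only [mem_setOf_eq] at hω ⊢
          exact ⟨hω.1, by linarith [hω.2]⟩
      have hb23 := hStopval t ht0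
      linarith
    -- combine
    have hdec := integral_add_compl hS0 (hht t)
    rw [hcompl] at hdec
    have expand : (m⁻¹ * Pc - m⁻¹ * q + (1 - G t)) * F t
        = m⁻¹ * F t * Pc + m⁻¹ * F t * (-q) + (1 - G t) * F t := by ring
    have hDlow : (m⁻¹ * Pc - m⁻¹ * q + (1 - G t)) * F t ≤ D t := by
      have hDapp : D t = ∫ ω, (G (t - X ω) - G t) ∂μ := rfl
      rw [hDapp, ← hdec, expand]
      linarith
    have hfin : a * F t < D t :=
      lt_of_lt_of_le (mul_lt_mul_of_pos_right hψt (hFpos t)) hDlow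
    exact (lt_div_iff₀ (hFpos t)).mpr hfin
  · -- UPPER BOUND: ∀ a > 0, eventually D t / F t < a
    intro a ha
    obtain ⟨B, hB⟩ : ∃ B : ℕ,
        q - m * a / 2 < ∫ ω in {ω | -(B:ℝ) ≤ X ω ∧ X ω < 0}, (-X ω) ∂μ := by
      have htr := neg_trunc_tendsto μ X hX hint
      have hlt : q - m * a / 2 < q := by nlinarith
      rw [← hqdef] at htr
      exact (htr.eventually (eventually_gt_nhds hlt)).exists
    set QB := ∫ ω in {ω | -(B:ℝ) ≤ X ω ∧ X ω < 0}, (-X ω) ∂μ with hQBdef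
    have hBnn : (0:ℝ) ≤ (B:ℝ) := Nat.cast_nonneg B
    have hΦ : Tendsto (fun t => m⁻¹ * ((∫ s in (0:ℝ)..t, F (t - s) * F s) / F t)
          - m⁻¹ * (I 0 - I t) - m⁻¹ * QB * (F (t + (B:ℝ)) / F t) + (1 - G t)) atTop
        (nhds (m⁻¹ * (2 * I 0) - m⁻¹ * (I 0 - 0) - m⁻¹ * QB * 1 + (1 - 0))) := by
      refine Tendsto.add ?_ ((tendsto_const_nhds).sub hGtend)
      refine Tendsto.sub (Tendsto.sub ?_ ?_) ?_
      · exact hconv.const_mul m⁻¹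
      · exact ((tendsto_const_nhds).sub hI_tendsto).const_mul m⁻¹
      · exact (hratio (B:ℝ) hBnn).const_mul (m⁻¹ * QB)
    have hlim : m⁻¹ * (2 * I 0) - m⁻¹ * (I 0 - 0) - m⁻¹ * QB * 1 + (1 - 0) < a := by
      have h1 : m⁻¹ * (q - m * a / 2) < m⁻¹ * QB := mul_lt_mul_of_pos_left hB hminv_pos
      have h2 : m⁻¹ * q = m⁻¹ * p + 1 := by
        rw [hqm, mul_add, inv_mul_cancel₀ hm_pos.ne']
      have h3 : m⁻¹ * (q - m * a / 2) = m⁻¹ * q - a / 2 := by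
        rw [mul_sub]
        congr 1
        rw [show m * a / 2 = m * (a/2) by ring, ← mul_assoc, inv_mul_cancel₀ hm_pos.ne', one_mul]
      have h4 : m⁻¹ * (2 * I 0) - m⁻¹ * (I 0 - 0) = m⁻¹ * I 0 := by ring
      have h5 : m⁻¹ * I 0 = m⁻¹ * p := by rw [hp_eq]
      linarith [h4, h5]
    filter_upwards [hΦ.eventually (eventually_lt_nhds hlim),
      eventually_ge_atTop (T + 1)] with t hΦt htT
    have ht0 : (0:ℝ) ≤ t := by linarith
    have htT' : T ≤ t := by linarith
    -- piece (i): upper bound on the negative part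
    have hXUB : ∫ ω in {ω | -(B:ℝ) ≤ X ω ∧ X ω < 0}, X ω ∂μ = -QB := by
      have h2 : ∫ ω in {ω | -(B:ℝ) ≤ X ω ∧ X ω < 0}, (-X ω) ∂μ
          = -∫ ω in {ω | -(B:ℝ) ≤ X ω ∧ X ω < 0}, X ω ∂μ := integral_neg _
      rw [hQBdef]
      linarith [h2]
    have hb1 : (∫ ω in {ω | X ω < 0}, (G (t - X ω) - G t) ∂μ)
        ≤ -(m⁻¹ * QB * F (t + (B:ℝ))) := by
      rw [hsplitS0 (B:ℝ) hBnn _ (hht t)]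
      have hUB_le : (∫ ω in {ω | -(B:ℝ) ≤ X ω ∧ X ω < 0}, (G (t - X ω) - G t) ∂μ)
          ≤ -(m⁻¹ * QB * F (t + (B:ℝ))) := by
        have hpt : ∀ ω ∈ {ω | -(B:ℝ) ≤ X ω ∧ X ω < 0},
            G (t - X ω) - G t ≤ m⁻¹ * F (t + (B:ℝ)) * X ω := by
          intro ω hω
          simp only [mem_setOf_eq] at hω
          have h1 : t ≤ t - X ω := by linarith [hω.2]
          have h2 := hIsplit t (t - X ω) h1
          have h3 := le_integral_tail_Ioc μ X t (t - X ω) h1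
          simp only [hFapp] at h3
          have h3' : (t - X ω - t) * F (t + (B:ℝ)) ≤ (t - X ω - t) * F (t - X ω) :=
            mul_le_mul_of_nonneg_left (hFanti (by linarith [hω.1])) (by linarith [hω.2])
          have h4 : G (t - X ω) - G t = m⁻¹ * I (t - X ω) - m⁻¹ * I t := by
            rw [hGm (t - X ω) (by linarith), hGm t htT']
          have h9 : m⁻¹ * ((t - X ω - t) * F (t + (B:ℝ))) ≤ m⁻¹ * (I t - I (t - X ω)) := by
            rw [h2]
            exact mul_le_mul_of_nonneg_left (le_trans h3' h3) hminv_pos.le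
          have h10 : m⁻¹ * (I t - I (t - X ω)) = -(m⁻¹ * I (t - X ω) - m⁻¹ * I t) := by ring
          have h11 : m⁻¹ * ((t - X ω - t) * F (t + (B:ℝ)))
              = -(m⁻¹ * F (t + (B:ℝ)) * X ω) := by ring
          rw [h10, h11] at h9
          linarith [h4, h9]
        have hmono := setIntegral_mono_on ((hht t).integrableOn)
          ((hint.const_mul (m⁻¹ * F (t + (B:ℝ)))).integrableOn) (hUBm (B:ℝ)) hpt
        rw [integral_const_mul, hXUB] at hmono
        calc (∫ ω in {ω | -(B:ℝ) ≤ X ω ∧ X ω < 0}, (G (t - X ω) - G t) ∂μ)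
            ≤ m⁻¹ * F (t + (B:ℝ)) * -QB := hmono
          _ = -(m⁻¹ * QB * F (t + (B:ℝ))) := by ring
      have hrest : (∫ ω in {ω | X ω < -(B:ℝ)}, (G (t - X ω) - G t) ∂μ) ≤ 0 := by
        refine setIntegral_nonpos (measurableSet_lt hX measurable_const) (fun ω hω => ?_)
        simp only [mem_setOf_eq] at hω
        have : t ≤ t - X ω := by nlinarith [hBnn]
        linarith [hGanti this]
      linarith
    -- piece (ii): upper bound on {0 ≤ X ≤ t}
    have hkmeas : Measurable (fun ω => I (max (t - X ω) 0) - I t) :=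
      ((hIanti.measurable).comp ((measurable_const.sub hX).max measurable_const)).sub
        measurable_const
    have hkint : Integrable (fun ω => I (max (t - X ω) 0) - I t) μ := by
      refine Integrable.mono' (integrable_const (I 0)) hkmeas.aestronglyMeasurable ?_
      refine Eventually.of_forall fun ω => ?_
      rw [Real.norm_eq_abs]
      have h1 : I (max (t - X ω) 0) ≤ I 0 := hIanti (le_max_right _ _)
      have h2 : 0 ≤ I (max (t - X ω) 0) := hInn _
      have h3 : 0 ≤ I t := hInn t
      have h4 : I t ≤ I 0 := hIanti ht0
      rw [abs_le]
      constructor <;> linarith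
    have hkAt : (∫ ω in {ω | 0 ≤ X ω ∧ X ω ≤ t}, (I (max (t - X ω) 0) - I t) ∂μ)
        = (∫ s in (0:ℝ)..t, F (t - s) * F s) - (I 0 - I t) * F t := by
      have hkey := fubini_key μ X hX hint t ht0
      simp only [hFapp, hIapp] at hkey
      have hsp := hsplit2 t ht0 _ hkint
      have hkStop : (∫ ω in {ω | t < X ω}, (I (max (t - X ω) 0) - I t) ∂μ)
          = (I 0 - I t) * F t := by
        have hconst : ∀ ω ∈ {ω | t < X ω}, I (max (t - X ω) 0) - I t = I 0 - I t := by
          intro ω hω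
          simp only [mem_setOf_eq] at hω
          rw [max_eq_right (by linarith : t - X ω ≤ 0)]
        rw [setIntegral_congr_fun (hStopm t) hconst, setIntegral_const, smul_eq_mul, mul_comm]
        rfl
      rw [hkey, hkStop] at hsp
      linarith
    have hb2 : (∫ ω in {ω | 0 ≤ X ω ∧ X ω ≤ t}, (G (t - X ω) - G t) ∂μ)
        ≤ m⁻¹ * ((∫ s in (0:ℝ)..t, F (t - s) * F s) - (I 0 - I t) * F t) := by
      have hpt : ∀ ω ∈ {ω | 0 ≤ X ω ∧ X ω ≤ t},
          G (t - X ω) - G t ≤ m⁻¹ * (I (max (t - X ω) 0) - I t) := by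
        intro ω hω
        simp only [mem_setOf_eq] at hω
        have h1 : 0 ≤ t - X ω := by linarith [hω.2]
        have h2 : G (t - X ω) ≤ m⁻¹ * I (t - X ω) := hGzero (t - X ω) h1
        have h3 : G t = m⁻¹ * I t := hGm t htT'
        rw [max_eq_left h1, mul_sub]
        linarith
      have hmono := setIntegral_mono_on ((hht t).integrableOn)
        ((hkint.const_mul m⁻¹).integrableOn) (hAtm t) hpt
      rw [integral_const_mul, hkAt] at hmono
      exact hmono
    -- piece (iii)
    have hb3 := hStopval t ht0
    -- combine
    have hdec := integral_add_compl hS0 (hht t)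
    rw [hcompl] at hdec
    have hsp2 := hsplit2 t ht0 _ (hht t)
    have hDapp : D t = ∫ ω, (G (t - X ω) - G t) ∂μ := rfl
    have hDup : D t ≤ m⁻¹ * (∫ s in (0:ℝ)..t, F (t - s) * F s)
        - m⁻¹ * ((I 0 - I t) * F t) - m⁻¹ * QB * F (t + (B:ℝ)) + (1 - G t) * F t := by
      have hdist : m⁻¹ * ((∫ s in (0:ℝ)..t, F (t - s) * F s) - (I 0 - I t) * F t)
          = m⁻¹ * (∫ s in (0:ℝ)..t, F (t - s) * F s) - m⁻¹ * ((I 0 - I t) * F t) := by ring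
      rw [hDapp, ← hdec, hsp2]
      linarith [hb1, hb2, hb3, hdist]
    have expand : (m⁻¹ * ((∫ s in (0:ℝ)..t, F (t - s) * F s) / F t)
          - m⁻¹ * (I 0 - I t) - m⁻¹ * QB * (F (t + (B:ℝ)) / F t) + (1 - G t)) * F t
        = m⁻¹ * (∫ s in (0:ℝ)..t, F (t - s) * F s)
          - m⁻¹ * ((I 0 - I t) * F t) - m⁻¹ * QB * F (t + (B:ℝ)) + (1 - G t) * F t := by
      have e1 : (∫ s in (0:ℝ)..t, F (t - s) * F s) / F t * F t
          = ∫ s in (0:ℝ)..t, F (t - s) * F s := div_mul_cancel₀ _ (hFpos t).ne'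
      have e2 : F (t + (B:ℝ)) / F t * F t = F (t + (B:ℝ)) := div_mul_cancel₀ _ (hFpos t).ne'
      calc _ = m⁻¹ * ((∫ s in (0:ℝ)..t, F (t - s) * F s) / F t * F t)
            - m⁻¹ * (I 0 - I t) * F t - m⁻¹ * QB * (F (t + (B:ℝ)) / F t * F t)
            + (1 - G t) * F t := by ring
        _ = _ := by rw [e1, e2]; ring
    have hfin : D t < a * F t := by
      have h1 : D t ≤ (m⁻¹ * ((∫ s in (0:ℝ)..t, F (t - s) * F s) / F t)
          - m⁻¹ * (I 0 - I t) - m⁻¹ * QB * (F (t + (B:ℝ)) / F t) + (1 - G t)) * F t := by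
        rw [expand]; exact hDup
      have h2 := mul_lt_mul_of_pos_right hΦt (hFpos t)
      linarith
    exact (div_lt_iff₀ (hFpos t)).mpr hfin
end
end
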